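/- arXiv:2409.19730 — 4 statements merged into one kernel-verified Lean document; each statement's English description precedes it below -/
import Mathlib

section
/- Let A be a real n×n matrix all of whose (complex) eigenvalues have negative real part, let d ≥ 1, and let c_1 ∈ ℝ^n, c_2 ∈ ℝ^{n^2}, …, c_d ∈ ℝ^{n^d} (with the convention c_i = 0 for i > d). For k = 2,…,2d let w_k ∈ ℝ^{n^k} satisfy L_k(A^⊤) w_k = − Σ_{i=1}^{k−1} c_i ⊗ c_{k−i}, and define E_o : ℝ^n → ℝ by E_o(x) = (1/2) Σ_{k=2}^{2d} w_k^⊤ x^{⊗k}. Then E_o solves the Lyapunov PDE: for every x ∈ ℝ^n, (∇E_o(x))^⊤ (A x) + (1/2) ( Σ_{j=1}^d c_j^⊤ x^{⊗j} )² = 0, where ∇E_o(x) is the gradient of E_o at x. -/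
/-!
Along a trajectory of `ẋ = A x` the Kronecker power `x^{⊗k}` has velocity `L_k(A) x^{⊗k}`
(product rule, one factor at a time). Hence the derivative of `w_kᵀ x^{⊗k}` in the direction
`A x` is `(L_k(Aᵀ) w_k)ᵀ x^{⊗k} = C_kᵀ x^{⊗k}`, and since `(u ⊗ v)ᵀ x^{⊗(a+b)}` factors as
`(uᵀ x^{⊗a}) (vᵀ x^{⊗b})`, this is minus the `k`-th convolution coefficient of the polynomial
`p(x) = Σ_j c_jᵀ x^{⊗j}`. Summing over `k = 2, …, 2d` reassembles `-p(x)²`.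
-/

open Matrix MeasureTheory
open scoped BigOperators Nat RealInnerProductSpace

noncomputable section

namespace LPO

/-- Multi-index representation of an index of `ℝ^{n^k}`. -/
def mi {n k : ℕ} (m : Fin (n ^ k)) : Fin k → Fin n :=
  finFunctionFinEquiv.symm m

/-- The Kronecker product `u₁ ⊗ ⋯ ⊗ u_k ∈ ℝ^{n^k}` of `k` vectors in `ℝ^n`. -/
def vkronFam (n k : ℕ) (u : Fin k → Fin n → ℝ) : Fin (n ^ k) → ℝ :=
  fun m => ∏ i, u i (mi m i)

/-- The `k`-fold Kronecker power `x ⊗ ⋯ ⊗ x ∈ ℝ^{n^k}` of `x ∈ ℝ^n`. -/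
def kpow {n : ℕ} (x : Fin n → ℝ) (k : ℕ) : Fin (n ^ k) → ℝ :=
  fun m => ∏ i, x (mi m i)

/-- Kronecker product `ℝ^{n^a} × ℝ^{n^b} → ℝ^{n^(a+b)}`. -/
def vkron {n a b : ℕ} (u : Fin (n ^ a) → ℝ) (v : Fin (n ^ b) → ℝ) :
    Fin (n ^ (a + b)) → ℝ :=
  fun m =>
    u (finFunctionFinEquiv fun i => mi m (Fin.castAdd b i)) *
      v (finFunctionFinEquiv fun i => mi m (Fin.natAdd a i))

/-- Cast `ℝ^{n^a} → ℝ^{n^b}` along a proof that `a = b`. -/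
def vcast {n a b : ℕ} (h : a = b) (v : Fin (n ^ a) → ℝ) : Fin (n ^ b) → ℝ :=
  fun m => v (Fin.cast (by rw [h]) m)

/-- Kronecker product of `k` (square, equally sized) matrices. -/
def mkron {n : ℕ} (k : ℕ) (M : Fin k → Matrix (Fin n) (Fin n) ℝ) :
    Matrix (Fin (n ^ k)) (Fin (n ^ k)) ℝ :=
  Matrix.of fun p q => ∏ i, M i (mi p i) (mi q i)

/-- `k`-fold Kronecker power of an `n × r` matrix. -/
def mkronRect {n r : ℕ} (k : ℕ) (Q : Matrix (Fin n) (Fin r) ℝ) :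
    Matrix (Fin (n ^ k)) (Fin (r ^ k)) ℝ :=
  Matrix.of fun p q => ∏ i, Q (mi p i) (mi q i)

/-- `L_k(A) = Σ_{j=1}^k I ⊗ ⋯ ⊗ I ⊗ A ⊗ I ⊗ ⋯ ⊗ I` with `A` in the `j`-th slot. -/
def LkMat {n : ℕ} (A : Matrix (Fin n) (Fin n) ℝ) (k : ℕ) :
    Matrix (Fin (n ^ k)) (Fin (n ^ k)) ℝ :=
  ∑ j : Fin k, mkron k fun i => if i = j then A else 1

/-- All complex eigenvalues of the real matrix `A` have negative real part. -/
def StableMat {n : ℕ} (A : Matrix (Fin n) (Fin n) ℝ) : Prop :=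
  ∀ z : ℂ, (A.map (algebraMap ℝ ℂ)).charpoly.IsRoot z → z.re < 0

/-- The mode-permutation operator `P_τ` on `ℝ^{n^k}`, characterized by
`P_τ (u₁ ⊗ ⋯ ⊗ u_k) = u_{τ(1)} ⊗ ⋯ ⊗ u_{τ(k)}`. -/
def permVec {n k : ℕ} (τ : Equiv.Perm (Fin k)) (w : Fin (n ^ k) → ℝ) :
    Fin (n ^ k) → ℝ :=
  fun m => w (finFunctionFinEquiv (mi m ∘ ⇑τ⁻¹))

/-- `w ∈ ℝ^{n^k}` has Kronecker (CP) rank at most `R`. -/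
def KrankLe {n k : ℕ} (w : Fin (n ^ k) → ℝ) (R : ℕ) : Prop :=
  ∃ u : Fin R → Fin k → Fin n → ℝ, w = ∑ j, vkronFam n k (u j)

/-- The right-hand side `C_k = -Σ_{i=1}^{k-1} c_i ⊗ c_{k-i}` of the linear system for `w_k`. -/
def Cvec {n : ℕ} (c : (i : ℕ) → Fin (n ^ i) → ℝ) (k : ℕ) : Fin (n ^ k) → ℝ :=
  -(∑ i ∈ (Finset.Icc 1 (k - 1)).attach,
      vcast (show i.1 + (k - i.1) = k from by
          have := Finset.mem_Icc.mp i.2; omega)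
        (vkron (c i.1) (c (k - i.1))))

/-- Euclidean norm on `ℝ^N`. -/
def enorm {N : ℕ} (v : Fin N → ℝ) : ℝ := Real.sqrt (v ⬝ᵥ v)

/-- Spectral norm of a complex matrix: the operator norm of the induced map between
Euclidean spaces. -/
def specNorm {m : ℕ} (M : Matrix (Fin m) (Fin m) ℂ) : ℝ :=
  ‖LinearMap.toContinuousLinearMap (Matrix.toEuclideanLin M)‖

/-- Euclidean ball of radius `L` in `ℝ^n`. -/
def eball (n : ℕ) (L : ℝ) : Set (Fin n → ℝ) := {x | x ⬝ᵥ x ≤ L ^ 2}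

/-- Square matricization `ℝ^{n^{2κ}} → ℝ^{n^κ × n^κ}`, characterized by
`(u₁⊗⋯⊗u_κ)ᵀ W (v₁⊗⋯⊗v_κ) = wᵀ (u₁⊗⋯⊗u_κ⊗v₁⊗⋯⊗v_κ)`. -/
def sqMatz {n κ : ℕ} (w : Fin (n ^ (2 * κ)) → ℝ) :
    Matrix (Fin (n ^ κ)) (Fin (n ^ κ)) ℝ :=
  Matrix.of fun p q =>
    w (Fin.cast (show n ^ (κ + κ) = n ^ (2 * κ) from by rw [two_mul])
        (finFunctionFinEquiv (Fin.append (mi p) (mi q))))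

end LPO

namespace LPO

/-- The low-rank right-hand side `C̃_k` (Lemma on minimal Kronecker rank). -/
def Ctil {n : ℕ} (c : (i : ℕ) → Fin (n ^ i) → ℝ) (k : ℕ) : Fin (n ^ k) → ℝ :=
  if hk : k % 2 = 1 then
    (2 : ℝ) • ∑ i ∈ (Finset.Icc 1 (k / 2)).attach,
      vcast (show i.1 + (k - i.1) = k from by
          have := Finset.mem_Icc.mp i.2; omega)
        (vkron (c i.1) (c (k - i.1)))
  else
    vcast (show k / 2 + k / 2 = k from by omega)
        (vkron (c (k / 2)) (c (k / 2)))
      + (2 : ℝ) • ∑ i ∈ (Finset.Icc 1 (k / 2 - 1)).attach,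
          vcast (show i.1 + (k - i.1) = k from by
              have := Finset.mem_Icc.mp i.2; omega)
            (vkron (c i.1) (c (k - i.1)))

/-- Quadrature step size `h_st = π / √ℓ`. -/
def quadStep (ℓ : ℕ) : ℝ := Real.pi / Real.sqrt ℓ

/-- Quadrature node `α_i`. -/
def quadNode (k : ℕ) (lmin : ℝ) (ℓ : ℕ) (i : ℤ) : ℝ :=
  Real.log (Real.exp (i * quadStep ℓ) +
      Real.sqrt (1 + Real.exp (2 * i * quadStep ℓ))) / (k * lmin)

/-- Quadrature weight `ω_i`. -/
def quadWeight (k : ℕ) (lmin : ℝ) (ℓ : ℕ) (i : ℤ) : ℝ :=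
  quadStep ℓ / (Real.sqrt (1 + Real.exp (-2 * i * quadStep ℓ)) * (k * lmin))

/-- The quadrature-based approximation
`x_ℓ = -Σ_{i=-ℓ}^{ℓ} ω_i (exp(α_i A) ⊗ ⋯ ⊗ exp(α_i A)) b`. -/
def quadApprox {n : ℕ} (A : Matrix (Fin n) (Fin n) ℝ) (k : ℕ) (lmin : ℝ) (ℓ : ℕ)
    (b : Fin (n ^ k) → ℝ) : Fin (n ^ k) → ℝ :=
  -(∑ i ∈ Finset.Icc (-(ℓ : ℤ)) (ℓ : ℤ),
      quadWeight k lmin ℓ i •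
        (mkron k (fun _ => NormedSpace.exp (quadNode k lmin ℓ i • A)) *ᵥ b))

end LPO

namespace LPO

open Finset

lemma sum_Icc_convolution_eq_sq {R : Type*} [CommSemiring R] {d : ℕ} (f : ℕ → R)
    (hf : ∀ i, d < i → f i = 0) :
    ∑ k ∈ Icc 2 (2 * d), ∑ i ∈ Icc 1 (k - 1), f i * f (k - i) = (∑ j ∈ Icc 1 d, f j) ^ 2 := by
  have hle : ∀ i, f i ≠ 0 → i ≤ d := fun i hi => not_lt.1 (mt (hf i) hi)
  rw [sq, sum_mul_sum, ← sum_product', sum_sigma']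
  -- `(k, i) ↦ (i, k - i)` maps onto the triangle `i + j ≤ 2d`, whose terms off `[1, d]²` vanish.
  refine sum_bij_ne_zero (fun a _ _ => (a.2, a.1 - a.2)) ?_ ?_ ?_ fun _ _ _ => rfl
  · rintro ⟨k, i⟩ hki hne
    have := hle i (left_ne_zero_of_mul hne)
    have := hle (k - i) (right_ne_zero_of_mul hne)
    simp only [mem_sigma, mem_Icc, mem_product] at hki ⊢
    omega
  · rintro ⟨k, i⟩ hki - ⟨k', i'⟩ hki' - h
    simp only [mem_sigma, mem_Icc, Prod.mk.injEq] at hki hki' h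
    obtain ⟨rfl, h⟩ := h
    have : k = k' := by omega
    subst this
    rfl
  · rintro ⟨i, j⟩ hij hne
    simp only [mem_product, mem_Icc] at hij
    refine ⟨⟨i + j, i⟩, by simp only [mem_sigma, mem_Icc]; omega, by simpa using hne, ?_⟩
    simp

section KroneckerPower

variable {n : ℕ}

lemma mi_finFunctionFinEquiv {k : ℕ} (g : Fin k → Fin n) :
    mi (n := n) (finFunctionFinEquiv g) = g :=
  finFunctionFinEquiv.symm_apply_apply g

lemma sum_comp_mi {k : ℕ} (F : (Fin k → Fin n) → ℝ) :
    ∑ m : Fin (n ^ k), F (mi m) = ∑ g : Fin k → Fin n, F g :=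
  finFunctionFinEquiv.symm.sum_comp F

lemma dotProduct_kpow_eq_sum {k : ℕ} (u : Fin (n ^ k) → ℝ) (x : Fin n → ℝ) :
    u ⬝ᵥ kpow x k = ∑ g : Fin k → Fin n, u (finFunctionFinEquiv g) * ∏ i, x (g i) := by
  rw [← sum_comp_mi]
  simp [dotProduct, kpow, mi]

lemma vkron_dotProduct_kpow {a b : ℕ} (u : Fin (n ^ a) → ℝ) (v : Fin (n ^ b) → ℝ)
    (x : Fin n → ℝ) :
    vkron u v ⬝ᵥ kpow x (a + b) = (u ⬝ᵥ kpow x a) * (v ⬝ᵥ kpow x b) := by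
  rw [dotProduct_kpow_eq_sum, ← (Fin.appendEquiv a b).sum_comp, Fintype.sum_prod_type,
    dotProduct_kpow_eq_sum, dotProduct_kpow_eq_sum, sum_mul_sum]
  refine sum_congr rfl fun g _ => sum_congr rfl fun h _ => ?_
  simp only [vkron, Fin.appendEquiv_apply, mi_finFunctionFinEquiv, Fin.append_left,
    Fin.append_right, Fin.prod_univ_add]
  ring

lemma vcast_dotProduct_kpow {a b : ℕ} (h : a = b) (v : Fin (n ^ a) → ℝ) (x : Fin n → ℝ) :
    vcast h v ⬝ᵥ kpow x b = v ⬝ᵥ kpow x a := by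
  subst h
  rfl

lemma Cvec_dotProduct_kpow (c : (i : ℕ) → Fin (n ^ i) → ℝ) (k : ℕ) (x : Fin n → ℝ) :
    Cvec c k ⬝ᵥ kpow x k
      = -∑ i ∈ Icc 1 (k - 1), (c i ⬝ᵥ kpow x i) * (c (k - i) ⬝ᵥ kpow x (k - i)) := by
  rw [Cvec, neg_dotProduct, sum_dotProduct, ← sum_attach (Icc 1 (k - 1))]
  simp only [vcast_dotProduct_kpow, vkron_dotProduct_kpow]

lemma mkron_transpose {k : ℕ} (M : Fin k → Matrix (Fin n) (Fin n) ℝ) :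
    (mkron k M)ᵀ = mkron k fun i => (M i)ᵀ := by
  ext p q
  simp [mkron]

lemma LkMat_transpose (A : Matrix (Fin n) (Fin n) ℝ) (k : ℕ) : (LkMat A k)ᵀ = LkMat Aᵀ k := by
  simp only [LkMat, transpose_sum, mkron_transpose, apply_ite transpose, transpose_one]

lemma mkron_mulVec_kpow {k : ℕ} (M : Fin k → Matrix (Fin n) (Fin n) ℝ) (x : Fin n → ℝ) :
    mkron k M *ᵥ kpow x k = vkronFam n k fun i => M i *ᵥ x := by
  funext p
  simp only [mulVec, dotProduct, mkron, kpow, vkronFam, of_apply, ← prod_mul_distrib]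
  rw [sum_comp_mi fun g => ∏ i, M i (mi p i) (g i) * x (g i), Fintype.prod_sum]

lemma LkMat_mulVec_kpow (A : Matrix (Fin n) (Fin n) ℝ) (k : ℕ) (x : Fin n → ℝ) :
    LkMat A k *ᵥ kpow x k
      = ∑ j : Fin k, vkronFam n k (Function.update (fun _ => x) j (A *ᵥ x)) := by
  simp only [LkMat, sum_mulVec, mkron_mulVec_kpow]
  refine sum_congr rfl fun j _ => congrArg _ (funext fun i => ?_)
  rcases eq_or_ne i j with rfl | hij <;> simp [*]

lemma hasFDerivAt_kpow (x : Fin n → ℝ) (k : ℕ) :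
    HasFDerivAt (kpow · k) (ContinuousLinearMap.pi fun m : Fin (n ^ k) =>
      ∑ j, (∏ i ∈ univ.erase j, x (mi m i)) •
        (ContinuousLinearMap.proj (mi m j) : (Fin n → ℝ) →L[ℝ] ℝ)) x :=
  hasFDerivAt_pi.2 fun m => HasFDerivAt.finsetProd fun j _ => hasFDerivAt_apply (mi m j) x

lemma fderiv_kpow_apply (x h : Fin n → ℝ) (k : ℕ) :
    fderiv ℝ (kpow · k) x h = ∑ j : Fin k, vkronFam n k (Function.update (fun _ => x) j h) := by
  rw [(hasFDerivAt_kpow x k).fderiv]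
  funext m
  simp only [ContinuousLinearMap.pi_apply, _root_.sum_apply, Finset.sum_apply, _root_.smul_apply,
    ContinuousLinearMap.proj_apply, smul_eq_mul, vkronFam]
  refine sum_congr rfl fun j _ => ?_
  rw [← mul_prod_erase univ _ (mem_univ j), Function.update_self, mul_comm]
  congr 1
  refine prod_congr rfl fun i hi => ?_
  rw [Function.update_of_ne (ne_of_mem_erase hi)]

lemma fderiv_kpow_mulVec (A : Matrix (Fin n) (Fin n) ℝ) (x : Fin n → ℝ) (k : ℕ) :
    fderiv ℝ (kpow · k) x (A *ᵥ x) = LkMat A k *ᵥ kpow x k := by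
  rw [fderiv_kpow_apply, LkMat_mulVec_kpow]

lemma hasFDerivAt_dotProduct_kpow {k : ℕ} (v : Fin (n ^ k) → ℝ) (x : Fin n → ℝ) :
    HasFDerivAt (fun y => v ⬝ᵥ kpow y k)
      ((dotProductBilin ℝ ℝ v).toContinuousLinearMap.comp (fderiv ℝ (kpow · k) x)) x :=
  (dotProductBilin ℝ ℝ v).toContinuousLinearMap.hasFDerivAt.comp x
    (hasFDerivAt_kpow x k).differentiableAt.hasFDerivAt

lemma fderiv_dotProduct_kpow_mulVec (A : Matrix (Fin n) (Fin n) ℝ) {k : ℕ}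
    (v : Fin (n ^ k) → ℝ) (x : Fin n → ℝ) :
    fderiv ℝ (fun y => v ⬝ᵥ kpow y k) x (A *ᵥ x) = (LkMat Aᵀ k *ᵥ v) ⬝ᵥ kpow x k := by
  rw [(hasFDerivAt_dotProduct_kpow v x).fderiv, ContinuousLinearMap.comp_apply,
    fderiv_kpow_mulVec, LinearMap.coe_toContinuousLinearMap', dotProductBilin_apply_apply,
    dotProduct_mulVec, ← mulVec_transpose, LkMat_transpose]

end KroneckerPower

theorem observability_energy_solves_lyapunov_pde_general
    {n d : ℕ}
    (A : Matrix (Fin n) (Fin n) ℝ)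
    (c : (i : ℕ) → Fin (n ^ i) → ℝ) (hc : ∀ i, d < i → c i = 0)
    (w : (k : ℕ) → Fin (n ^ k) → ℝ)
    (hw : ∀ k ∈ Finset.Icc 2 (2 * d), LkMat Aᵀ k *ᵥ w k = Cvec c k) :
    ∀ x : Fin n → ℝ,
      fderiv ℝ
          (fun y : Fin n → ℝ =>
            (1 / 2) * ∑ k ∈ Finset.Icc 2 (2 * d), w k ⬝ᵥ kpow y k) x (A *ᵥ x)
        + (1 / 2) * (∑ j ∈ Finset.Icc 1 d, c j ⬝ᵥ kpow x j) ^ 2 = 0 := by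
  intro x
  have hdiff : ∀ k ∈ Icc 2 (2 * d), DifferentiableAt ℝ (fun y => w k ⬝ᵥ kpow y k) x :=
    fun k _ => (hasFDerivAt_dotProduct_kpow (w k) x).differentiableAt
  have hterm : ∀ k ∈ Icc 2 (2 * d), fderiv ℝ (fun y => w k ⬝ᵥ kpow y k) x (A *ᵥ x)
      = -∑ i ∈ Icc 1 (k - 1), (c i ⬝ᵥ kpow x i) * (c (k - i) ⬝ᵥ kpow x (k - i)) :=
    fun k hk => by rw [fderiv_dotProduct_kpow_mulVec, hw k hk, Cvec_dotProduct_kpow]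
  have hsq := sum_Icc_convolution_eq_sq (d := d) (fun j => c j ⬝ᵥ kpow x j)
    fun i hi => by rw [hc i hi, zero_dotProduct]
  rw [fderiv_const_mul (DifferentiableAt.fun_sum hdiff), fderiv_fun_sum hdiff, _root_.smul_apply,
    _root_.sum_apply, sum_congr rfl hterm, sum_neg_distrib, hsq, smul_eq_mul]
  ring

/-- The polynomial `E_o(x) = (1/2) Σ_{k=2}^{2d} w_kᵀ x^{⊗k}`, with
`w_k` solving `L_k(Aᵀ) w_k = -Σ_{i=1}^{k-1} c_i ⊗ c_{k-i}`, solves the Lyapunov PDE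
`(∇E_o(x))ᵀ (A x) + (1/2)(Σ_{j=1}^d c_jᵀ x^{⊗j})² = 0` (the gradient term being
the directional derivative of `E_o` at `x` in the direction `A x`). -/
theorem observability_energy_solves_lyapunov_pde
    {n d : ℕ} (hd : 1 ≤ d)
    (A : Matrix (Fin n) (Fin n) ℝ) (hA : StableMat A)
    (c : (i : ℕ) → Fin (n ^ i) → ℝ) (hc : ∀ i, d < i → c i = 0)
    (w : (k : ℕ) → Fin (n ^ k) → ℝ)
    (hw : ∀ k ∈ Finset.Icc 2 (2 * d), LkMat Aᵀ k *ᵥ w k = Cvec c k) :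
    ∀ x : Fin n → ℝ,
      fderiv ℝ
          (fun y : Fin n → ℝ =>
            (1 / 2) * ∑ k ∈ Finset.Icc 2 (2 * d), w k ⬝ᵥ kpow y k) x (A *ᵥ x)
        + (1 / 2) * (∑ j ∈ Finset.Icc 1 d, c j ⬝ᵥ kpow x j) ^ 2 = 0 :=
  observability_energy_solves_lyapunov_pde_general A c hc w hw

end LPO
end
end

section
/- Let n ≥ 1, d ≥ 2, R ≥ 1, let c_1 ∈ ℝ^n and c_i ∈ ℝ^{n^i} for i = 2,…,d with krank(c_i) ≤ R for all i = 2,…,d (with the convention c_i = 0 for i > d). For k > 2 define: if k = 2κ+1 is odd, C̃_k := 2 Σ_{i=1}^{κ} c_i ⊗ c_{k−i}; if k = 2κ is even, C̃_k := c_κ ⊗ c_κ + 2 Σ_{i=1}^{κ−1} c_i ⊗ c_{k−i}; and C̃_2 := c_1 ⊗ c_1. Then krank(C̃_2) ≤ 1, and for every k > 2 (with κ = ⌊k/2⌋) one has krank(C̃_k) ≤ (κ−1) R² + R. -/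
open Matrix MeasureTheory
open scoped BigOperators Nat RealInnerProductSpace

noncomputable section

namespace LPO

/-! Kronecker rank is subadditive, invariant under scaling and submultiplicative under `⊗`, and
every vector of `ℝ^n` has rank one. Since `c_i = 0` for `i > d`, `krank c_i ≤ R` for all `i ≥ 2`.
So in `C̃_k` the term `c_1 ⊗ c_{k-1}` has rank at most `R`, and each of the other `κ - 1` terms
(`c_i ⊗ c_{k-i}` with `i ≥ 2`, and `c_κ ⊗ c_κ` when `k` is even) rank at most `R²`. -/

section KrankLe

variable {n : ℕ}

lemma krankLe_zero {k : ℕ} (hk : 1 ≤ k) (R : ℕ) : KrankLe (0 : Fin (n ^ k) → ℝ) R := by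
  refine ⟨fun _ _ _ => 0, ?_⟩
  have hzero : vkronFam n k (fun _ _ => 0) = 0 := by
    funext m
    simp only [vkronFam, Finset.prod_const, Finset.card_univ, Fintype.card_fin, Pi.zero_apply]
    exact zero_pow (by omega)
  simp [hzero]

lemma KrankLe.add {k R S : ℕ} {w w' : Fin (n ^ k) → ℝ}
    (h : KrankLe w R) (h' : KrankLe w' S) : KrankLe (w + w') (R + S) := by
  obtain ⟨u, rfl⟩ := h
  obtain ⟨v, rfl⟩ := h'
  exact ⟨Fin.append u v, by simp [Fin.sum_univ_add]⟩

lemma krankLe_sum {k : ℕ} {ι : Type*} (s : Finset ι) {f : ι → Fin (n ^ k) → ℝ} {r : ι → ℕ}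
    (h : ∀ i ∈ s, KrankLe (f i) (r i)) : KrankLe (∑ i ∈ s, f i) (∑ i ∈ s, r i) := by
  classical
  induction s using Finset.cons_induction with
  | empty =>
    rw [Finset.sum_empty, Finset.sum_empty]
    exact ⟨Fin.elim0, by simp⟩
  | cons a s _ ih =>
    rw [Finset.sum_cons, Finset.sum_cons]
    exact (h a (Finset.mem_cons_self a s)).add
      (ih fun i hi => h i (Finset.mem_cons_of_mem hi))

lemma KrankLe.smul {k R : ℕ} (hk : 1 ≤ k) (a : ℝ) {w : Fin (n ^ k) → ℝ}
    (h : KrankLe w R) : KrankLe (a • w) R := by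
  obtain ⟨u, rfl⟩ := h
  refine ⟨fun j i x => (if i = ⟨0, hk⟩ then a else 1) * u j i x, ?_⟩
  rw [Finset.smul_sum]
  refine Finset.sum_congr rfl fun j _ => funext fun m => ?_
  simp only [vkronFam, Pi.smul_apply, smul_eq_mul, Finset.prod_mul_distrib]
  simp

lemma krankLe_one_of_pow_one (v : Fin (n ^ 1) → ℝ) : KrankLe v 1 := by
  refine ⟨fun _ _ x => v (finFunctionFinEquiv fun _ => x), funext fun m => ?_⟩
  have hmi : (fun _ : Fin 1 => finFunctionFinEquiv.symm m 0) = finFunctionFinEquiv.symm m :=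
    funext fun i => by rw [Subsingleton.elim i 0]
  simp [vkronFam, mi, hmi]

lemma KrankLe.vkron {a b R S : ℕ} {u : Fin (n ^ a) → ℝ} {v : Fin (n ^ b) → ℝ}
    (hu : KrankLe u R) (hv : KrankLe v S) : KrankLe (vkron u v) (R * S) := by
  obtain ⟨f, rfl⟩ := hu
  obtain ⟨g, rfl⟩ := hv
  let e : Fin R × Fin S ≃ Fin (R * S) := finProdFinEquiv
  refine ⟨fun J => Fin.append (f (e.symm J).1) (g (e.symm J).2), funext fun m => ?_⟩
  have hfactor : ∀ j l, vkronFam n a (f j) (finFunctionFinEquiv fun i => mi m (Fin.castAdd b i)) *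
      vkronFam n b (g l) (finFunctionFinEquiv fun i => mi m (Fin.natAdd a i)) =
      vkronFam n (a + b) (Fin.append (f j) (g l)) m := by
    intro j l
    simp [vkronFam, mi, Fin.prod_univ_add]
  simp only [LPO.vkron, Finset.sum_apply, Finset.sum_mul_sum, hfactor]
  rw [← e.sum_comp, Fintype.sum_prod_type]
  simp [e]

lemma KrankLe.vcast {a b R : ℕ} (h : a = b) {w : Fin (n ^ a) → ℝ}
    (hw : KrankLe w R) : KrankLe (vcast h w) R := by
  subst h
  exact hw

end KrankLe

section Ctil

variable {n R : ℕ} {c : (i : ℕ) → Fin (n ^ i) → ℝ}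

lemma krankLe_vkron_of_krankLe (hc : ∀ i, 2 ≤ i → KrankLe (c i) R) {i j : ℕ} (hi : 1 ≤ i)
    (hj : 2 ≤ j) : KrankLe (vkron (c i) (c j)) (if i = 1 then R else R ^ 2) := by
  split_ifs with hi1
  · subst hi1
    simpa using (krankLe_one_of_pow_one (c 1)).vkron (hc j hj)
  · simpa [sq] using (hc i (by omega)).vkron (hc j hj)

lemma krankLe_smul_sum_vkron (hc : ∀ i, 2 ≤ i → KrankLe (c i) R) {k m : ℕ} (hmk : m + 2 ≤ k)
    (a : ℝ) :
    KrankLe (a • ∑ i ∈ (Finset.Icc 1 m).attach,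
        vcast (show i.1 + (k - i.1) = k by have := Finset.mem_Icc.mp i.2; omega)
          (vkron (c i.1) (c (k - i.1))))
      (∑ i ∈ Finset.Icc 1 m, if i = 1 then R else R ^ 2) := by
  rw [← Finset.sum_attach (Finset.Icc 1 m) (fun i => if i = 1 then R else R ^ 2)]
  refine KrankLe.smul (show 1 ≤ k by omega) a (krankLe_sum _ fun i _ => ?_)
  have := Finset.mem_Icc.mp i.2
  exact (krankLe_vkron_of_krankLe hc (by omega) (by omega)).vcast _

lemma sum_Icc_ite_one_sq {m : ℕ} (hm : 1 ≤ m) :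
    ∑ i ∈ Finset.Icc 1 m, (if i = 1 then R else R ^ 2) = (m - 1) * R ^ 2 + R := by
  induction m, hm using Nat.le_induction with
  | base => simp
  | succ m hm ih =>
    rw [Finset.sum_Icc_succ_top (by omega), ih, if_neg (by omega), Nat.add_sub_cancel]
    zify [hm]
    ring

lemma krankLe_Ctil_two (c : (i : ℕ) → Fin (n ^ i) → ℝ) : KrankLe (Ctil c 2) 1 := by
  have h := ((krankLe_one_of_pow_one (c 1)).vkron (krankLe_one_of_pow_one (c 1))).vcast
    (show 1 + 1 = 2 from rfl)
  convert h using 1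
  rw [Ctil, dif_neg (by decide),
    Finset.sum_eq_zero fun i _ => absurd (Finset.mem_Icc.mp i.2) (by omega), smul_zero, add_zero]

lemma krankLe_Ctil_of_odd (hc : ∀ i, 2 ≤ i → KrankLe (c i) R) {k : ℕ} (hodd : k % 2 = 1)
    (hk : 2 < k) : KrankLe (Ctil c k) ((k / 2 - 1) * R ^ 2 + R) := by
  rw [Ctil, dif_pos hodd, ← sum_Icc_ite_one_sq (by omega)]
  exact krankLe_smul_sum_vkron hc (by omega) 2

lemma krankLe_Ctil_of_even (hc : ∀ i, 2 ≤ i → KrankLe (c i) R) {k : ℕ} (heven : k % 2 = 0)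
    (hk : 2 < k) : KrankLe (Ctil c k) ((k / 2 - 1) * R ^ 2 + R) := by
  rw [Ctil, dif_neg (by omega)]
  have hhead := ((hc _ (by omega)).vkron (hc _ (by omega))).vcast
    (show k / 2 + k / 2 = k by omega)
  have htail := krankLe_smul_sum_vkron hc (k := k) (m := k / 2 - 1) (by omega) 2
  convert hhead.add htail using 1
  obtain ⟨j, hj⟩ : ∃ j, k / 2 = j + 2 := ⟨k / 2 - 2, by omega⟩
  rw [sum_Icc_ite_one_sq (by omega), hj, show j + 2 - 1 - 1 = j by omega,
    show j + 2 - 1 = j + 1 by omega]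
  ring

end Ctil

theorem krank_Ctil_bound_general
    {n d R : ℕ}
    (c : (i : ℕ) → Fin (n ^ i) → ℝ) (hc0 : ∀ i, d < i → c i = 0)
    (hcR : ∀ i, 2 ≤ i → i ≤ d → KrankLe (c i) R) :
    KrankLe (Ctil c 2) 1 ∧
      ∀ k, 2 < k → KrankLe (Ctil c k) ((k / 2 - 1) * R ^ 2 + R) := by
  have hc : ∀ i, 2 ≤ i → KrankLe (c i) R := fun i hi =>
    (le_or_gt i d).elim (hcR i hi) fun hid => hc0 i hid ▸ krankLe_zero (by omega) R
  refine ⟨krankLe_Ctil_two c, fun k hk => ?_⟩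
  rcases Nat.mod_two_eq_zero_or_one k with heven | hodd
  · exact krankLe_Ctil_of_even hc heven hk
  · exact krankLe_Ctil_of_odd hc hodd hk

/-- If `krank(c_i) ≤ R` for `i = 2,…,d` (and `c_i = 0` for `i > d`),
then the symmetrized right-hand sides `C̃_k` satisfy `krank(C̃_2) ≤ 1` and, for `k > 2`
with `κ = ⌊k/2⌋`, `krank(C̃_k) ≤ (κ-1)R² + R`. -/
theorem krank_Ctil_bound
    {n d R : ℕ} (hn : 1 ≤ n) (hd : 2 ≤ d) (hR : 1 ≤ R)
    (c : (i : ℕ) → Fin (n ^ i) → ℝ) (hc0 : ∀ i, d < i → c i = 0)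
    (hcR : ∀ i, 2 ≤ i → i ≤ d → KrankLe (c i) R) :
    KrankLe (Ctil c 2) 1 ∧
      ∀ k, 2 < k → KrankLe (Ctil c k) ((k / 2 - 1) * R ^ 2 + R) :=
  krank_Ctil_bound_general c hc0 hcR

end LPO
end
end

section
/- Let P, W ∈ ℝ^{n×n} be symmetric positive definite, let R ∈ ℝ^{n×n} be invertible with P = R R^⊤, let U ∈ ℝ^{n×n} be orthogonal and Σ ∈ ℝ^{n×n} diagonal with positive diagonal entries such that R^⊤ W R = U Σ² U^⊤. Then the matrix T := Σ^{1/2} U^⊤ R^{-1} is invertible and simultaneously diagonalizes P and W in the balancing sense: T P T^⊤ = Σ and T^{-⊤} W T^{-1} = Σ. -/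
open Matrix MeasureTheory
open scoped BigOperators Nat RealInnerProductSpace

noncomputable section

/-!
Write `D = Σ^{1/2}` and `T = D Uᵀ R⁻¹`. Since `R⁻¹ P R⁻ᵀ = 1` and `Uᵀ U = 1`, `T P Tᵀ = D Dᵀ = Σ`.
For the second identity it is easier to go backwards: `Tᵀ Σ T = R⁻ᵀ U (D Σ D) Uᵀ R⁻¹` and
`D Σ D = Σ² = Uᵀ (Rᵀ W R) U`, so `Tᵀ Σ T = W`, which is `T⁻ᵀ W T⁻¹ = Σ` once `T` is invertible.
-/

namespace LPO

section BalancingTransform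

variable {m K : Type*} [Fintype m] [DecidableEq m] [CommRing K]

theorem transpose_nonsing_inv_mul_mul_nonsing_inv {T : Matrix m m K} (hT : IsUnit T.det)
    (S : Matrix m m K) : T⁻¹ᵀ * (Tᵀ * S * T) * T⁻¹ = S := by
  have hTt : IsUnit Tᵀ.det := by rwa [det_transpose]
  rw [transpose_nonsing_inv, Matrix.mul_assoc, Matrix.mul_assoc, mul_nonsing_inv _ hT,
    Matrix.mul_one, ← Matrix.mul_assoc, nonsing_inv_mul _ hTt, Matrix.one_mul]

def balancingTransform (D U R : Matrix m m K) : Matrix m m K := D * Uᵀ * R⁻¹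

variable {D U R : Matrix m m K}

theorem isUnit_det_balancingTransform (hD : IsUnit D.det) (hU : Uᵀ * U = 1)
    (hR : IsUnit R.det) : IsUnit (balancingTransform D U R).det := by
  have hUt : IsUnit Uᵀ.det := isUnit_det_of_right_inverse hU
  rw [balancingTransform, det_mul, det_mul]
  exact (hD.mul hUt).mul (isUnit_nonsing_inv_det R hR)

theorem balancingTransform_mul_mul_transpose (hU : Uᵀ * U = 1) (hR : IsUnit R.det) :
    balancingTransform D U R * (R * Rᵀ) * (balancingTransform D U R)ᵀ = D * Dᵀ := by
  have hRt : Rᵀ * R⁻¹ᵀ = 1 := by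
    rw [transpose_nonsing_inv, mul_nonsing_inv _ (by rwa [det_transpose])]
  calc balancingTransform D U R * (R * Rᵀ) * (balancingTransform D U R)ᵀ
      = D * (Uᵀ * (R⁻¹ * R) * (Rᵀ * R⁻¹ᵀ) * U) * Dᵀ := by
        simp only [balancingTransform, transpose_mul, transpose_transpose, Matrix.mul_assoc]
    _ = D * Dᵀ := by
        rw [nonsing_inv_mul _ hR, hRt, Matrix.mul_one, Matrix.mul_one, hU, Matrix.mul_one]

theorem eq_transpose_balancingTransform_mul_mul {W S : Matrix m m K} (hR : IsUnit R.det)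
    (hW : Rᵀ * W * R = U * (Dᵀ * S * D) * Uᵀ) :
    W = (balancingTransform D U R)ᵀ * S * balancingTransform D U R := by
  calc W = R⁻¹ᵀ * (Rᵀ * W * R) * R⁻¹ := (transpose_nonsing_inv_mul_mul_nonsing_inv hR W).symm
    _ = (balancingTransform D U R)ᵀ * S * balancingTransform D U R := by
        simp only [hW, balancingTransform, transpose_mul, transpose_transpose, Matrix.mul_assoc]

end BalancingTransform

section DiagonalSqrt

variable {m : Type*} [Fintype m] [DecidableEq m] {σ : m → ℝ}

theorem isUnit_det_diagonal_sqrt (hσ : ∀ i, 0 < σ i) :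
    IsUnit (diagonal fun i => √(σ i)).det := by
  rw [det_diagonal]
  exact (Finset.prod_pos fun i _ => Real.sqrt_pos.mpr (hσ i)).ne'.isUnit

theorem diagonal_sqrt_mul_transpose (hσ : ∀ i, 0 ≤ σ i) :
    (diagonal fun i => √(σ i)) * (diagonal fun i => √(σ i))ᵀ = diagonal σ := by
  rw [diagonal_transpose, diagonal_mul_diagonal]
  exact congrArg diagonal (funext fun i => Real.mul_self_sqrt (hσ i))

theorem transpose_diagonal_sqrt_mul_mul (hσ : ∀ i, 0 ≤ σ i) :
    (diagonal fun i => √(σ i))ᵀ * diagonal σ * (diagonal fun i => √(σ i)) =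
      diagonal fun i => σ i ^ 2 := by
  rw [diagonal_transpose, diagonal_mul_diagonal, diagonal_mul_diagonal]
  refine congrArg diagonal (funext fun i => ?_)
  rw [mul_right_comm, Real.mul_self_sqrt (hσ i), sq]

end DiagonalSqrt

theorem balancing_transformation_general
    {n : ℕ} (P W R U : Matrix (Fin n) (Fin n) ℝ) (σ : Fin n → ℝ)
    (hR : IsUnit R.det)
    (hPR : P = R * Rᵀ) (hU : Uᵀ * U = 1) (hσ : ∀ i, 0 < σ i)
    (hWR : Rᵀ * W * R = U * Matrix.diagonal (fun i => σ i ^ 2) * Uᵀ) :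
    IsUnit (Matrix.diagonal (fun i => Real.sqrt (σ i)) * Uᵀ * R⁻¹).det ∧
    (Matrix.diagonal (fun i => Real.sqrt (σ i)) * Uᵀ * R⁻¹) * P *
        (Matrix.diagonal (fun i => Real.sqrt (σ i)) * Uᵀ * R⁻¹)ᵀ
      = Matrix.diagonal σ ∧
    ((Matrix.diagonal (fun i => Real.sqrt (σ i)) * Uᵀ * R⁻¹)⁻¹)ᵀ * W *
        (Matrix.diagonal (fun i => Real.sqrt (σ i)) * Uᵀ * R⁻¹)⁻¹
      = Matrix.diagonal σ := by
  have hσ₀ : ∀ i, 0 ≤ σ i := fun i => (hσ i).le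
  have hT := isUnit_det_balancingTransform (isUnit_det_diagonal_sqrt hσ) hU hR
  have hWT : W = (balancingTransform _ U R)ᵀ * diagonal σ * balancingTransform _ U R :=
    eq_transpose_balancingTransform_mul_mul hR
      (by rw [hWR, transpose_diagonal_sqrt_mul_mul hσ₀])
  refine ⟨hT, ?_, ?_⟩
  · rw [hPR, ← diagonal_sqrt_mul_transpose hσ₀]
    exact balancingTransform_mul_mul_transpose hU hR
  · rw [hWT]
    exact transpose_nonsing_inv_mul_mul_nonsing_inv hT _

/-- The balancing transformation `T = Σ^{1/2} Uᵀ R⁻¹` is invertible and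
simultaneously diagonalizes `P` and `W`: `T P Tᵀ = Σ` and `T⁻ᵀ W T⁻¹ = Σ`. -/
theorem balancing_transformation
    {n : ℕ} (P W R U : Matrix (Fin n) (Fin n) ℝ) (σ : Fin n → ℝ)
    (hP : P.PosDef) (hW : W.PosDef) (hR : IsUnit R.det)
    (hPR : P = R * Rᵀ) (hU : Uᵀ * U = 1) (hσ : ∀ i, 0 < σ i)
    (hWR : Rᵀ * W * R = U * Matrix.diagonal (fun i => σ i ^ 2) * Uᵀ) :
    IsUnit (Matrix.diagonal (fun i => Real.sqrt (σ i)) * Uᵀ * R⁻¹).det ∧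
    (Matrix.diagonal (fun i => Real.sqrt (σ i)) * Uᵀ * R⁻¹) * P *
        (Matrix.diagonal (fun i => Real.sqrt (σ i)) * Uᵀ * R⁻¹)ᵀ
      = Matrix.diagonal σ ∧
    ((Matrix.diagonal (fun i => Real.sqrt (σ i)) * Uᵀ * R⁻¹)⁻¹)ᵀ * W *
        (Matrix.diagonal (fun i => Real.sqrt (σ i)) * Uᵀ * R⁻¹)⁻¹
      = Matrix.diagonal σ :=
  balancing_transformation_general P W R U σ hR hPR hU hσ hWR

end LPO
end
end

section
/- Let A ∈ ℝ^{n×n}, B ∈ ℝ^{n×m}, and let P ∈ ℝ^{n×n} be symmetric, invertible, and satisfy the Lyapunov equation A P + P A^⊤ + B B^⊤ = 0. Then the quadratic function E_c(x) = (1/2) x^⊤ P^{-1} x satisfies the Hamilton–Jacobi PDE: for every x ∈ ℝ^n, x^⊤ P^{-1} A x + (1/2) ‖B^⊤ P^{-1} x‖² = 0; equivalently, (∇E_c(x))^⊤ A x + (1/2) (∇E_c(x))^⊤ B B^⊤ ∇E_c(x) = 0 for all x, where ∇E_c(x) = P^{-1} x. -/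
open Matrix MeasureTheory
open scoped BigOperators Nat RealInnerProductSpace

noncomputable section

/-!
Put `g = P⁻¹ x`, so that `x = P g`. Since `P` is symmetric, `(A P)ᵀ = P Aᵀ`, and a matrix and its
transpose have the same quadratic form; hence `2 gᵀ A P g = gᵀ (A P + P Aᵀ) g = -gᵀ B Bᵀ g`.
Both forms of the Hamilton–Jacobi equation are this identity written in `x`.
-/

namespace LPO

section

variable {ι κ R : Type*} [Fintype ι] [Fintype κ] [CommSemiring R]

theorem dotProduct_mul_transpose_self_mulVec (B : Matrix ι κ R) (v : ι → R) :
    v ⬝ᵥ ((B * Bᵀ) *ᵥ v) = (Bᵀ *ᵥ v) ⬝ᵥ (Bᵀ *ᵥ v) := by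
  rw [← mulVec_mulVec, dotProduct_mulVec, mulVec_transpose]

theorem two_mul_dotProduct_mulVec_add_eq_zero_of_lyapunov {A P : Matrix ι ι R}
    (Q : Matrix ι ι R) (hP : P.IsSymm) (hlyap : A * P + P * Aᵀ + Q = 0) (g : ι → R) :
    2 * (g ⬝ᵥ (A *ᵥ (P *ᵥ g))) + g ⬝ᵥ (Q *ᵥ g) = 0 := by
  have hAP : (A * P)ᵀ = P * Aᵀ := by rw [transpose_mul, hP.eq]
  have hsymm : g ⬝ᵥ ((P * Aᵀ) *ᵥ g) = g ⬝ᵥ ((A * P) *ᵥ g) := by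
    rw [← hAP, dotProduct_transpose_mulVec]
  calc 2 * (g ⬝ᵥ (A *ᵥ (P *ᵥ g))) + g ⬝ᵥ (Q *ᵥ g)
      = g ⬝ᵥ ((A * P + P * Aᵀ + Q) *ᵥ g) := by
        rw [add_mulVec, add_mulVec, dotProduct_add, dotProduct_add, hsymm, mulVec_mulVec]
        ring
    _ = 0 := by rw [hlyap, zero_mulVec, dotProduct_zero]

end

/-- If `P` is symmetric, invertible and solves
`AP + PAᵀ + BBᵀ = 0`, then `E_c(x) = (1/2) xᵀ P⁻¹ x` solves the Hamilton–Jacobi PDE: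
`xᵀ P⁻¹ A x + (1/2)‖Bᵀ P⁻¹ x‖² = 0`; equivalently, with `∇E_c(x) = P⁻¹x`,
`(∇E_c(x))ᵀ A x + (1/2)(∇E_c(x))ᵀ B Bᵀ ∇E_c(x) = 0`. -/
theorem controllability_energy_solves_hjb
    {n m : ℕ} (A : Matrix (Fin n) (Fin n) ℝ) (B : Matrix (Fin n) (Fin m) ℝ)
    (P : Matrix (Fin n) (Fin n) ℝ) (hPsymm : P.IsSymm) (hPinv : IsUnit P.det)
    (hlyap : A * P + P * Aᵀ + B * Bᵀ = 0) :
    ∀ x : Fin n → ℝ,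
      x ⬝ᵥ ((P⁻¹ * A) *ᵥ x) +
          (1 / 2) * ((Bᵀ *ᵥ (P⁻¹ *ᵥ x)) ⬝ᵥ (Bᵀ *ᵥ (P⁻¹ *ᵥ x))) = 0 ∧
      (P⁻¹ *ᵥ x) ⬝ᵥ (A *ᵥ x) +
          (1 / 2) * ((P⁻¹ *ᵥ x) ⬝ᵥ ((B * Bᵀ) *ᵥ (P⁻¹ *ᵥ x))) = 0 := by
  intro x
  have hPg : P *ᵥ (P⁻¹ *ᵥ x) = x := by rw [mulVec_mulVec, mul_nonsing_inv P hPinv, one_mulVec]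
  have hgrad : (P⁻¹ *ᵥ x) ⬝ᵥ (A *ᵥ x) +
      (1 / 2) * ((P⁻¹ *ᵥ x) ⬝ᵥ ((B * Bᵀ) *ᵥ (P⁻¹ *ᵥ x))) = 0 := by
    have h := two_mul_dotProduct_mulVec_add_eq_zero_of_lyapunov (B * Bᵀ) hPsymm hlyap (P⁻¹ *ᵥ x)
    rw [hPg] at h
    linarith
  have hx : x ⬝ᵥ ((P⁻¹ * A) *ᵥ x) = (P⁻¹ *ᵥ x) ⬝ᵥ (A *ᵥ x) := by
    rw [← mulVec_mulVec, dotProduct_mulVec, ← mulVec_transpose, transpose_nonsing_inv, hPsymm.eq]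
  rw [hx, ← dotProduct_mul_transpose_self_mulVec]
  exact ⟨hgrad, hgrad⟩

end LPO
end
end
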